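/- Suppose a Markov kernel κ from ℝ to ℝ satisfies (μ_x.bind κ).bind G = μ_x.bind G for every x ∈ ℝ (the channel is manipulated by κ without changing conditional output laws). Define the joint observation law under attack κ as Λ_κ := (1/2)·Σ_{s ∈ {−1,+1}} N(h3·s, 1) ⊗ (((N(h1·s,1)).bind κ).bind G) on ℝ × ℝ, and let Λ_δ be the same construction with κ replaced by the Dirac kernel u ↦ δ_u (honest relaying). Then Λ_κ = Λ_δ; consequently, for every n ≥ 1 the n-fold product measures satisfy Λ_κ^{⊗n} = Λ_δ^{⊗n}, and therefore every measurable statistic D : (ℝ × ℝ)^n → ℝ has the same distribution under the i.i.d. attack κ as under honest relaying, so no decision statistic based on the destination's observations can distinguish the attack from honest relaying. -/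

import Mathlib

open MeasureTheory ProbabilityTheory
open scoped ENNReal

/-- Bayes posterior weight of source symbol `+1` given direct observation `x`. -/
noncomputable def mixWeight (h3 x : ℝ) : ℝ :=
  Real.exp (-(x - h3) ^ 2 / 2) /
    (Real.exp (-(x - h3) ^ 2 / 2) + Real.exp (-(x + h3) ^ 2 / 2))

/-- Conditional law of the relay's observation given direct observation `x`:
`μ_x = w(x) • N(h1,1) + (1 - w(x)) • N(-h1,1)`. -/
noncomputable def muX (h1 h3 x : ℝ) : Measure ℝ :=
  ENNReal.ofReal (mixWeight h3 x) • gaussianReal h1 1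
    + ENNReal.ofReal (1 - mixWeight h3 x) • gaussianReal (-h1) 1

/-- Relay-to-destination Gaussian channel `G(v) = N(h2 ⬝ v, 1)`. -/
noncomputable def Gchan (h2 : ℝ) : ℝ → Measure ℝ := fun v => gaussianReal (h2 * v) 1

/-- Joint law of the destination's two observations when the relay applies the
(attack) channel `κ : ℝ → Measure ℝ`:
`Λ_κ = (1/2) Σ_{s ∈ {-1,+1}} N(h3 s,1) ⊗ (((N(h1 s,1)).bind κ).bind G)`. -/
noncomputable def jointLaw (h1 h2 h3 : ℝ) (κ : ℝ → Measure ℝ) : Measure (ℝ × ℝ) :=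
  (1 / 2 : ℝ≥0∞) •
      ((gaussianReal (h3 * 1) 1).prod (((gaussianReal (h1 * 1) 1).bind κ).bind (Gchan h2)))
    + (1 / 2 : ℝ≥0∞) •
      ((gaussianReal (h3 * (-1)) 1).prod
        (((gaussianReal (h1 * (-1)) 1).bind κ).bind (Gchan h2)))

/-!
Given the direct observation `x`, the destination's relayed observation has law
`w(x) • A + (1 - w(x)) • B`, where `A`, `B` are its laws given the source symbol `±1`; the hypothesis says this mixture is the same under the attack as under honest
relaying, for every `x`. The weight `w(x) = (1 + exp (-2 h3 x))⁻¹` is logistic, so for `h3 ≠ 0`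
two distinct weights `w(h3) ≠ w(-h3)` force `A` and `B` themselves to be unchanged, and `Λ` is
built from `A` and `B` alone. For `h3 = 0` the direct observation is uninformative, `w ≡ 1/2`,
and `Λ` only depends on `A + B`, which the mixture with weight `1/2` determines.
-/

namespace MeasureTheory.Measure

variable {α β : Type*} [MeasurableSpace α] [MeasurableSpace β] {μ ν μ' ν' : Measure α}
  {a b w : ℝ}

noncomputable def mixture (w : ℝ) (μ ν : Measure α) : Measure α :=
  ENNReal.ofReal w • μ + ENNReal.ofReal (1 - w) • ν

@[simp]
lemma comp_mixture (κ : Kernel α β) : κ ∘ₘ mixture w μ ν = mixture w (κ ∘ₘ μ) (κ ∘ₘ ν) := by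
  simp [mixture]

lemma mixture_apply_toReal (hw : w ∈ Set.Icc 0 1) [IsFiniteMeasure μ] [IsFiniteMeasure ν]
    (s : Set α) :
    (mixture w μ ν s).toReal = w * (μ s).toReal + (1 - w) * (ν s).toReal := by
  rw [mixture, add_apply, smul_apply, smul_apply, smul_eq_mul, smul_eq_mul,
    ENNReal.toReal_add (by finiteness) (by finiteness), ENNReal.toReal_mul, ENNReal.toReal_mul,
    ENNReal.toReal_ofReal hw.1, ENNReal.toReal_ofReal (by linarith [hw.2])]

lemma eq_and_eq_of_mixture_eq_of_ne [IsFiniteMeasure μ] [IsFiniteMeasure ν]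
    [IsFiniteMeasure μ'] [IsFiniteMeasure ν'] (ha : a ∈ Set.Icc 0 1) (hb : b ∈ Set.Icc 0 1)
    (hab : a ≠ b) (h_a : mixture a μ ν = mixture a μ' ν') (h_b : mixture b μ ν = mixture b μ' ν') :
    μ = μ' ∧ ν = ν' := by
  have key : ∀ s, (μ s).toReal = (μ' s).toReal ∧ (ν s).toReal = (ν' s).toReal := by
    intro s
    have e_a := congrArg (fun m : Measure α => (m s).toReal) h_a
    have e_b := congrArg (fun m : Measure α => (m s).toReal) h_b
    simp only [mixture_apply_toReal ha, mixture_apply_toReal hb] at e_a e_b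
    -- the two differences solve a 2×2 linear system with determinant `a - b`
    have hd : (μ s).toReal - (μ' s).toReal = (ν s).toReal - (ν' s).toReal :=
      sub_eq_zero.mp ((mul_eq_zero.mp (by linear_combination e_a - e_b)).resolve_left
        (sub_ne_zero.mpr hab))
    exact ⟨by linear_combination e_a + (1 - a) * hd, by linear_combination e_a - a * hd⟩
  refine ⟨ext fun s _ => ?_, ext fun s _ => ?_⟩ <;>
    refine (ENNReal.toReal_eq_toReal_iff' (by finiteness) (by finiteness)).mp ?_
  exacts [(key s).1, (key s).2]

lemma mixture_half (μ ν : Measure α) :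
    mixture (1 / 2) μ ν = ENNReal.ofReal (1 / 2) • (μ + ν) := by
  rw [mixture, smul_add]
  norm_num

lemma add_eq_add_of_mixture_half_eq (h : mixture (1 / 2) μ ν = mixture (1 / 2) μ' ν') :
    μ + ν = μ' + ν' := by
  rw [mixture_half, mixture_half] at h
  ext s -
  have hs := congrArg (· s) h
  simp only [smul_apply, smul_eq_mul] at hs
  exact (ENNReal.mul_right_inj (by norm_num) ENNReal.ofReal_ne_top).mp hs

end MeasureTheory.Measure

lemma measurable_Gchan (h2 : ℝ) : Measurable (Gchan h2) :=
  measurable_gaussianReal.comp ((measurable_const_mul h2).prodMk measurable_const)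

noncomputable def gaussianChannel (h2 : ℝ) : Kernel ℝ ℝ := ⟨Gchan h2, measurable_Gchan h2⟩

instance (h2 : ℝ) : IsMarkovKernel (gaussianChannel h2) :=
  ⟨fun v => inferInstanceAs (IsProbabilityMeasure (gaussianReal (h2 * v) 1))⟩

lemma mixWeight_eq_inv_one_add_exp (h3 x : ℝ) :
    mixWeight h3 x = (1 + Real.exp (-(2 * h3 * x)))⁻¹ := by
  have hsplit : Real.exp (-(x + h3) ^ 2 / 2)
      = Real.exp (-(x - h3) ^ 2 / 2) * Real.exp (-(2 * h3 * x)) := by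
    rw [← Real.exp_add]
    ring_nf
  rw [mixWeight, hsplit]
  field_simp

lemma mixWeight_mem_Icc (h3 x : ℝ) : mixWeight h3 x ∈ Set.Icc 0 1 := by
  rw [mixWeight_eq_inv_one_add_exp]
  exact ⟨by positivity, inv_le_one_of_one_le₀ (by linarith [Real.exp_pos (-(2 * h3 * x))])⟩

lemma mixWeight_zero_left (x : ℝ) : mixWeight 0 x = 1 / 2 := by
  norm_num [mixWeight_eq_inv_one_add_exp]

lemma mixWeight_injective {h3 : ℝ} (h3_ne : h3 ≠ 0) : Function.Injective (mixWeight h3) := by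
  intro x y hxy
  simp only [mixWeight_eq_inv_one_add_exp, inv_inj, add_right_inj, Real.exp_eq_exp,
    neg_inj] at hxy
  exact mul_left_cancel₀ (by positivity) hxy

lemma muX_eq_mixture (h1 h3 x : ℝ) :
    muX h1 h3 x = Measure.mixture (mixWeight h3 x) (gaussianReal h1 1) (gaussianReal (-h1) 1) :=
  rfl

lemma jointLaw_eq_comp (h1 h2 h3 : ℝ) (κ : ℝ → Measure ℝ) :
    jointLaw h1 h2 h3 κ =
      (1 / 2 : ℝ≥0∞) • (gaussianReal h3 1).prod (gaussianChannel h2 ∘ₘ κ ∘ₘ gaussianReal h1 1)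
      + (1 / 2 : ℝ≥0∞) • (gaussianReal (-h3) 1).prod
          (gaussianChannel h2 ∘ₘ κ ∘ₘ gaussianReal (-h1) 1) := by
  simp only [jointLaw, mul_one, mul_neg_one]
  rfl

theorem jointLaw_eq_jointLaw_dirac (h1 h2 h3 : ℝ) (κ : Kernel ℝ ℝ) [IsFiniteKernel κ]
    (hκ : ∀ x, gaussianChannel h2 ∘ₘ κ ∘ₘ muX h1 h3 x = gaussianChannel h2 ∘ₘ muX h1 h3 x) :
    jointLaw h1 h2 h3 κ = jointLaw h1 h2 h3 Measure.dirac := by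
  rw [jointLaw_eq_comp, jointLaw_eq_comp, Measure.bind_dirac, Measure.bind_dirac]
  set G := gaussianChannel h2
  have hmix : ∀ x, Measure.mixture (mixWeight h3 x) (G ∘ₘ κ ∘ₘ gaussianReal h1 1)
      (G ∘ₘ κ ∘ₘ gaussianReal (-h1) 1)
      = Measure.mixture (mixWeight h3 x) (G ∘ₘ gaussianReal h1 1) (G ∘ₘ gaussianReal (-h1) 1) :=
    fun x => by simpa only [muX_eq_mixture, Measure.comp_mixture] using hκ x
  rcases eq_or_ne h3 0 with rfl | h3_ne
  · -- both branches share the law `N(0,1)` of the direct observation, so only their sum matters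
    have hsum := Measure.add_eq_add_of_mixture_half_eq
      (by simpa only [mixWeight_zero_left] using hmix 0)
    rw [neg_zero, ← smul_add, ← smul_add, ← Measure.prod_add, ← Measure.prod_add, hsum]
  · obtain ⟨hplus, hminus⟩ := Measure.eq_and_eq_of_mixture_eq_of_ne (mixWeight_mem_Icc h3 h3)
      (mixWeight_mem_Icc h3 (-h3)) ((mixWeight_injective h3_ne).ne fun h => h3_ne (by linarith))
      (hmix h3) (hmix (-h3))
    rw [hplus, hminus]

/-- **Undetectability of channel-law-preserving attacks (necessity direction).**
If a Markov kernel `κ` leaves every conditional output law unchanged, then the joint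
observation law under attack equals the one under honest (Dirac) relaying; hence all
finite product laws coincide and every measurable decision statistic has the same
distribution under the attack as under honest relaying. -/
theorem undetectable_of_manipulation (h1 h2 h3 : ℝ)
    (κ : Kernel ℝ ℝ) [IsMarkovKernel κ]
    (hκ : ∀ x : ℝ,
      ((muX h1 h3 x).bind (κ ·)).bind (Gchan h2) = (muX h1 h3 x).bind (Gchan h2)) :
    jointLaw h1 h2 h3 (κ ·) = jointLaw h1 h2 h3 (fun u => Measure.dirac u) ∧
    (∀ n : ℕ, 1 ≤ n →
      Measure.pi (fun _ : Fin n => jointLaw h1 h2 h3 (κ ·))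
        = Measure.pi (fun _ : Fin n => jointLaw h1 h2 h3 (fun u => Measure.dirac u))) ∧
    (∀ n : ℕ, 1 ≤ n → ∀ D : (Fin n → ℝ × ℝ) → ℝ, Measurable D →
      (Measure.pi (fun _ : Fin n => jointLaw h1 h2 h3 (κ ·))).map D
        = (Measure.pi (fun _ : Fin n => jointLaw h1 h2 h3 (fun u => Measure.dirac u))).map D) := by
  have h : jointLaw h1 h2 h3 (κ ·) = jointLaw h1 h2 h3 (fun u => Measure.dirac u) :=
    jointLaw_eq_jointLaw_dirac h1 h2 h3 κ hκ
  exact ⟨h, fun _ _ => by rw [h], fun _ _ _ _ => by rw [h]⟩
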